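/- Orthogonality of invariant vectors for different speeds (Lemma 4.2). Assume Hypothesis (SL). Fix n ∈ ℤ^D with n ≠ 0 and let v, w ∈ ℝ \ {0} with v ≠ w. If Ψ ∈ H satisfies U(n, ‖n‖₁/v)Ψ = Ψ and ⟨Ω, Ψ⟩ = 0, and Ψ' ∈ H satisfies U(n, ‖n‖₁/w)Ψ' = Ψ' and ⟨Ω, Ψ'⟩ = 0, then ⟨Ψ, Ψ'⟩ = 0. -/

import Mathlib

open Filter MeasureTheory Topology

noncomputable def l1 {D : ℕ} (n : Fin D → ℤ) : ℝ := ∑ i, |(n i : ℝ)|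

variable {D : ℕ} {H : Type*} [NormedAddCommGroup H] [InnerProductSpace ℂ H]
  [CompleteSpace H] [TopologicalSpace.SeparableSpace H]

/-!
Let `p = (n, ‖n‖₁/v)` and `p' = (n, ‖n‖₁/w)`. Since `U p` commutes with `U p'`, the orthogonal
projection `χ` of `Ψ` onto the `U p'`-invariant vectors is still `U p`-invariant, hence invariant
under every `U (b • p' - a • p)`. As `1/v ≠ 1/w`, rounding produces integers `a ≠ b` for which
`b • p' - a • p = ((b - a) • n, ‖n‖₁ (b/w - a/v))` is space-like. So `χ` is a multiple of `Ω`
by (SL), and `⟨Ψ, Ψ'⟩ = ⟨χ, Ψ'⟩ = 0` as `Ψ'` is `U p'`-invariant and orthogonal to `Ω`.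
-/

theorem l1_pos {n : Fin D → ℤ} (hn : n ≠ 0) : 0 < l1 n := by
  obtain ⟨i, hi⟩ := Function.ne_iff.mp hn
  exact Finset.sum_pos' (fun j _ => abs_nonneg _)
    ⟨i, Finset.mem_univ i, abs_pos.mpr (Int.cast_ne_zero.mpr hi)⟩

theorem l1_zsmul (k : ℤ) (n : Fin D → ℤ) : l1 (k • n) = |(k : ℝ)| * l1 n := by
  simp only [l1, Finset.mul_sum, Pi.smul_apply, smul_eq_mul, Int.cast_mul, abs_mul]

theorem exists_ne_int_mul_abs_sub_lt (c : ℝ) {x y : ℝ} (hxy : x ≠ y) :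
    ∃ a b : ℤ, a ≠ b ∧ c * |b * y - a * x| < |(b : ℝ) - a| := by
  obtain ⟨k, hk⟩ := exists_nat_gt (|c| * |y - x| / 2)
  have hk0 : (0 : ℝ) < k := lt_of_le_of_lt (by positivity) hk
  -- with `b = a + k` we get `b y - a x = (y - x) (a + k y / (y - x))`, which rounding makes small
  set a : ℤ := round (-(k * y) / (y - x))
  refine ⟨a, a + k, by have : 0 < k := Nat.cast_pos.mp hk0; omega, ?_⟩
  have hsmall : |((a + k : ℤ) : ℝ) * y - a * x| ≤ |y - x| / 2 := by
    have hround := abs_sub_round (-(k * y) / (y - x))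
    rw [abs_sub_comm] at hround
    calc |((a + k : ℤ) : ℝ) * y - a * x| = |y - x| * |a - -(k * y) / (y - x)| := by
          rw [← abs_mul]; congr 1; push_cast; field_simp [sub_ne_zero.mpr hxy.symm]; ring
      _ ≤ |y - x| * (1 / 2) := by gcongr
      _ = |y - x| / 2 := by ring
  calc c * |((a + k : ℤ) : ℝ) * y - a * x| ≤ |c| * (|y - x| / 2) :=
        mul_le_mul (le_abs_self c) hsmall (abs_nonneg _) (abs_nonneg c)
    _ < k := by rwa [← mul_div_assoc]
    _ = |((a + k : ℤ) : ℝ) - a| := by push_cast; rw [add_sub_cancel_left, abs_of_pos hk0]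

theorem exists_spacelike_zsmul_sub_zsmul (vc : ℝ) {n : Fin D → ℤ} (hn : n ≠ 0) {s t : ℝ}
    (hst : s ≠ t) :
    ∃ a b : ℤ, let q := b • (n, t) - a • (n, s); q.1 ≠ 0 ∧ vc * |q.2| < l1 q.1 := by
  obtain ⟨a, b, hab, hlt⟩ := exists_ne_int_mul_abs_sub_lt (vc / l1 n) hst
  have hq : b • (n, t) - a • (n, s) = ((b - a) • n, b * t - a * s) := by
    ext <;> simp [sub_mul]
  refine ⟨a, b, ?_⟩
  simp only [hq]
  refine ⟨smul_ne_zero (sub_ne_zero.mpr hab.symm) hn, ?_⟩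
  calc vc * |b * t - a * s| = l1 n * (vc / l1 n * |b * t - a * s|) := by
        field_simp [(l1_pos hn).ne']
    _ < l1 n * |(b : ℝ) - a| := mul_lt_mul_of_pos_left hlt (l1_pos hn)
    _ = l1 ((b - a) • n) := by rw [l1_zsmul, Int.cast_sub, mul_comm]

namespace LinearIsometryEquiv

variable {𝕜 E : Type*} [RCLike 𝕜] [NormedAddCommGroup E] [InnerProductSpace 𝕜 E]

def fixedSubmodule (W : E ≃ₗᵢ[𝕜] E) : Submodule 𝕜 E :=
  LinearMap.eqLocus (W : E →ₗ[𝕜] E) LinearMap.id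

theorem mem_fixedSubmodule {W : E ≃ₗᵢ[𝕜] E} {x : E} : x ∈ W.fixedSubmodule ↔ W x = x :=
  Iff.rfl

theorem isClosed_fixedSubmodule (W : E ≃ₗᵢ[𝕜] E) : IsClosed (W.fixedSubmodule : Set E) :=
  isClosed_eq W.continuous continuous_id

instance [CompleteSpace E] (W : E ≃ₗᵢ[𝕜] E) : W.fixedSubmodule.HasOrthogonalProjection :=
  have := W.isClosed_fixedSubmodule.completeSpace_coe
  inferInstance

theorem apply_mem_fixedSubmodule_of_commute {V W : E ≃ₗᵢ[𝕜] E} (h : Commute V W) {x : E}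
    (hx : x ∈ W.fixedSubmodule) : V x ∈ W.fixedSubmodule := by
  rw [mem_fixedSubmodule] at hx ⊢
  simpa [coe_mul, hx] using congr($(h.eq) x).symm

theorem starProjection_fixedSubmodule_apply_of_commute [CompleteSpace E] {V W : E ≃ₗᵢ[𝕜] E}
    (h : Commute V W) (x : E) :
    W.fixedSubmodule.starProjection (V x) = V (W.fixedSubmodule.starProjection x) := by
  refine Submodule.eq_starProjection_of_mem_orthogonal
    (apply_mem_fixedSubmodule_of_commute h (Submodule.starProjection_apply_mem _ x))
    fun y hy => ?_
  rw [← map_sub, ← V.apply_symm_apply y, inner_map_map]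
  exact Submodule.sub_starProjection_mem_orthogonal x _
    (apply_mem_fixedSubmodule_of_commute h.inv_left hy)

variable (𝕜) in
def stabilizer (x : E) : Subgroup (E ≃ₗᵢ[𝕜] E) where
  carrier := {e | e x = x}
  mul_mem' {e f} he hf := by simp_all [coe_mul]
  one_mem' := rfl
  inv_mem' {e} he := by simp_all [coe_inv, symm_apply_eq]

end LinearIsometryEquiv

open LinearIsometryEquiv Multiplicative

theorem invariant_vectors_orthogonal_general
    (U : (Fin D → ℤ) × ℝ → H ≃ₗᵢ[ℂ] H)
    (hUadd : ∀ p q : (Fin D → ℤ) × ℝ, U (p + q) = (U q).trans (U p))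
    (Ω : H)
    (vc : ℝ)
    (hSL : ∀ (m : Fin D → ℤ) (t : ℝ), m ≠ 0 → vc * |t| < l1 m →
      ∀ ψ : H, U (m, t) ψ = ψ → ∃ c : ℂ, ψ = c • Ω)
    (n : Fin D → ℤ) (hn : n ≠ 0) (v w : ℝ) (hvw : v ≠ w)
    (Ψ Ψ' : H)
    (hΨ : U (n, l1 n / v) Ψ = Ψ)
    (hΨ' : U (n, l1 n / w) Ψ' = Ψ') (hΨ'Ω : (inner ℂ Ω Ψ' : ℂ) = 0) :
    (inner ℂ Ψ Ψ' : ℂ) = 0 := by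
  have hst : l1 n / v ≠ l1 n / w := by simpa [div_eq_mul_inv, (l1_pos hn).ne'] using hvw
  let ρ : Multiplicative ((Fin D → ℤ) × ℝ) →* (H ≃ₗᵢ[ℂ] H) :=
    MonoidHom.mk' (fun p => U p.toAdd) hUadd
  set p₁ : (Fin D → ℤ) × ℝ := (n, l1 n / v)
  set p₂ : (Fin D → ℤ) × ℝ := (n, l1 n / w)
  have hcomm : Commute (U p₁) (U p₂) := (Commute.all (ofAdd p₁) (ofAdd p₂)).map ρ
  set χ := (U p₂).fixedSubmodule.starProjection Ψ
  have hχ₁ : U p₁ ∈ stabilizer ℂ χ := by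
    show U p₁ χ = χ
    rw [← starProjection_fixedSubmodule_apply_of_commute hcomm, hΨ]
  have hχ₂ : U p₂ ∈ stabilizer ℂ χ := (U p₂).fixedSubmodule.starProjection_apply_mem Ψ
  obtain ⟨a, b, hq0, hq⟩ := exists_spacelike_zsmul_sub_zsmul vc hn hst
  have hχq : U (b • p₂ - a • p₁) χ = χ := by
    show ρ (ofAdd (b • p₂ - a • p₁)) ∈ stabilizer ℂ χ
    rw [ofAdd_sub, ofAdd_zsmul, ofAdd_zsmul, map_div, map_zpow, map_zpow]
    exact div_mem (zpow_mem hχ₂ b) (zpow_mem hχ₁ a)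
  obtain ⟨c, hc⟩ := hSL _ _ hq0 hq χ hχq
  calc inner ℂ Ψ Ψ' = inner ℂ χ Ψ' := by
        rw [Submodule.inner_starProjection_left_eq_right,
          Submodule.starProjection_eq_self_iff.mpr hΨ']
    _ = 0 := by rw [hc, inner_smul_left, hΨ'Ω, mul_zero]

/-- **Orthogonality of invariant vectors for different speeds** (Lemma 4.2). -/
theorem invariant_vectors_orthogonal
    (U : (Fin D → ℤ) × ℝ → H ≃ₗᵢ[ℂ] H)
    (hU0 : U 0 = LinearIsometryEquiv.refl ℂ H)
    (hUadd : ∀ p q : (Fin D → ℤ) × ℝ, U (p + q) = (U q).trans (U p))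
    (Ω : H) (hΩ : ‖Ω‖ = 1) (hΩinv : ∀ p, U p Ω = Ω)
    (vc : ℝ) (hvc : 0 < vc)
    (hSL : ∀ (m : Fin D → ℤ) (t : ℝ), m ≠ 0 → vc * |t| < l1 m →
      ∀ ψ : H, U (m, t) ψ = ψ → ∃ c : ℂ, ψ = c • Ω)
    (n : Fin D → ℤ) (hn : n ≠ 0) (v w : ℝ) (hv : v ≠ 0) (hw : w ≠ 0) (hvw : v ≠ w)
    (Ψ Ψ' : H)
    (hΨ : U (n, l1 n / v) Ψ = Ψ) (hΨΩ : (inner ℂ Ω Ψ : ℂ) = 0)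
    (hΨ' : U (n, l1 n / w) Ψ' = Ψ') (hΨ'Ω : (inner ℂ Ω Ψ' : ℂ) = 0) :
    (inner ℂ Ψ Ψ' : ℂ) = 0 :=
  invariant_vectors_orthogonal_general U hUadd Ω vc hSL n hn v w hvw Ψ Ψ' hΨ hΨ' hΨ'Ω
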